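/- arXiv:1310.5564 — 7 statements merged into one kernel-verified Lean document; each statement's English description precedes it below -/
import Mathlib

section
/- Fix t1 with t1 ≤ s_min. Then the function f(t2) = MI(t1,t2,a) has exactly one point D where the left derivative strictly exceeds the right derivative, namely D = e_max (assuming p > 0 and using one-sided derivatives, which exist everywhere since f is piecewise linear). -/
/-- Minimum intersection of an activity (sMin, sMax, p) with interval [t1,t2]. -/
noncomputable def MI (sMin sMax p t1 t2 : ℝ) : ℝ :=
  max 0 (min (min p (t2 - t1)) (min (sMin + p - t1) (t2 - sMax)))

/-- Left derivative. -/
noncomputable def leftD (f : ℝ → ℝ) (x : ℝ) : ℝ := derivWithin f (Set.Iio x) x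

/-- Right derivative. -/
noncomputable def rightD (f : ℝ → ℝ) (x : ℝ) : ℝ := derivWithin f (Set.Ioi x) x

/-! For `t1 ≤ sMin ≤ sMax` the constraints `t2 - t1` and `sMin + p - t1` never bind, so
`MI` is the ramp `t2 ↦ max 0 (min p (t2 - sMax))`: zero up to `sMax`, slope one up to
`sMax + p`, then constant. Its left derivative is the indicator of `(sMax, sMax + p]` and its
right derivative that of `[sMax, sMax + p)`, so they differ in the right direction only at
`sMax + p`. -/

open Set Filter Topology

lemma leftD_eq_of_eventuallyEq {f g : ℝ → ℝ} {x d : ℝ} (hfg : f =ᶠ[𝓝[≤] x] g)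
    (hg : HasDerivAt g d x) : leftD f x = d :=
  (hg.hasDerivWithinAt.congr_of_eventuallyEq
    (hfg.filter_mono (nhdsWithin_mono x Iio_subset_Iic_self))
    (hfg.self_of_nhdsWithin self_mem_Iic)).derivWithin (uniqueDiffWithinAt_Iio x)

lemma rightD_eq_of_eventuallyEq {f g : ℝ → ℝ} {x d : ℝ} (hfg : f =ᶠ[𝓝[≥] x] g)
    (hg : HasDerivAt g d x) : rightD f x = d :=
  (hg.hasDerivWithinAt.congr_of_eventuallyEq
    (hfg.filter_mono (nhdsWithin_mono x Ioi_subset_Ici_self))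
    (hfg.self_of_nhdsWithin self_mem_Ici)).derivWithin (uniqueDiffWithinAt_Ioi x)

noncomputable def ramp (c p t : ℝ) : ℝ := max 0 (min p (t - c))

section Ramp

variable {c p t : ℝ}

lemma ramp_of_le (ht : t ≤ c) : ramp c p t = 0 :=
  max_eq_left ((min_le_right _ _).trans (sub_nonpos.mpr ht))

lemma ramp_of_mem_Icc (ht : t ∈ Icc c (c + p)) : ramp c p t = t - c := by
  obtain ⟨hct, htp⟩ := ht
  rw [ramp, min_eq_right (by linarith), max_eq_right (by linarith)]

lemma ramp_of_add_le (hp : 0 ≤ p) (ht : c + p ≤ t) : ramp c p t = p := by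
  rw [ramp, min_eq_left (by linarith), max_eq_right hp]

lemma leftD_ramp (hp : 0 ≤ p) (x : ℝ) :
    leftD (ramp c p) x = if x ∈ Ioc c (c + p) then 1 else 0 := by
  split_ifs with hx
  · refine leftD_eq_of_eventuallyEq ?_ ((hasDerivAt_id' x).sub_const c)
    filter_upwards [Ioc_mem_nhdsLE hx.1] with t ht
    exact ramp_of_mem_Icc ⟨ht.1.le, ht.2.trans hx.2⟩
  · rcases le_or_gt x c with hxc | hxc
    · refine leftD_eq_of_eventuallyEq ?_ (hasDerivAt_const x 0)
      filter_upwards [self_mem_nhdsWithin] with t (ht : t ≤ x)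
      exact ramp_of_le (ht.trans hxc)
    · have hpx : c + p < x := lt_of_not_ge fun h => hx ⟨hxc, h⟩
      refine leftD_eq_of_eventuallyEq ?_ (hasDerivAt_const x p)
      filter_upwards [nhdsWithin_le_nhds (Ioi_mem_nhds hpx)] with t (ht : c + p < t)
      exact ramp_of_add_le hp ht.le

lemma rightD_ramp (hp : 0 ≤ p) (x : ℝ) :
    rightD (ramp c p) x = if x ∈ Ico c (c + p) then 1 else 0 := by
  split_ifs with hx
  · refine rightD_eq_of_eventuallyEq ?_ ((hasDerivAt_id' x).sub_const c)
    filter_upwards [Ico_mem_nhdsGE hx.2] with t ht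
    exact ramp_of_mem_Icc ⟨hx.1.trans ht.1, ht.2.le⟩
  · rcases lt_or_ge x c with hxc | hxc
    · refine rightD_eq_of_eventuallyEq ?_ (hasDerivAt_const x 0)
      filter_upwards [nhdsWithin_le_nhds (Iio_mem_nhds hxc)] with t (ht : t < c)
      exact ramp_of_le ht.le
    · have hpx : c + p ≤ x := le_of_not_gt fun h => hx ⟨hxc, h⟩
      refine rightD_eq_of_eventuallyEq ?_ (hasDerivAt_const x p)
      filter_upwards [self_mem_nhdsWithin] with t (ht : x ≤ t)
      exact ramp_of_add_le hp (hpx.trans ht)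

lemma rightD_ramp_lt_leftD_ramp_iff (hp : 0 < p) (x : ℝ) :
    rightD (ramp c p) x < leftD (ramp c p) x ↔ x = c + p := by
  rw [leftD_ramp hp.le, rightD_ramp hp.le]
  simp only [mem_Ioc, mem_Ico]
  split_ifs with hIco hIoc hIoc <;> norm_num
  · exact ne_of_lt (by linarith [hIco.2])
  · exact ne_of_lt hIco.2
  · exact le_antisymm hIoc.2 (le_of_not_gt fun h => hIco ⟨hIoc.1.le, h⟩)
  · rintro rfl
    exact hIoc ⟨by linarith, le_rfl⟩

end Ramp

lemma MI_eq_ramp {sMin sMax p t1 : ℝ} (hs : sMin ≤ sMax) (ht1 : t1 ≤ sMin) (t2 : ℝ) :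
    MI sMin sMax p t1 t2 = ramp sMax p t2 := by
  rw [MI, ramp, min_min_min_comm, min_eq_left (by linarith : p ≤ sMin + p - t1),
    min_eq_right (by linarith : t2 - sMax ≤ t2 - t1)]

theorem mi_unique_inflection_case1 (sMin sMax p t1 : ℝ)
    (hs : sMin ≤ sMax) (hp : 0 < p) (ht1 : t1 ≤ sMin) :
    ∀ x : ℝ,
      leftD (fun t2 => MI sMin sMax p t1 t2) x >
        rightD (fun t2 => MI sMin sMax p t1 t2) x ↔ x = sMax + p := by
  intro x
  simp only [MI_eq_ramp hs ht1]
  exact rightD_ramp_lt_leftD_ramp_iff hp x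
end

section
/- For any fixed t1 and any activity a, the function t2 ↦ MI(t1,t2,a) has at most one point at which its left derivative strictly exceeds its right derivative. -/
/-! With `b = max t1 sMax + min p (sMin + p - t1)`, the function `t2 ↦ MI(t1, t2, a)` is the
convex ramp `max 0 (t2 - max t1 sMax)` left of `b` and constant right of `b`. A convex function
has left derivative at most its right derivative at interior points, so the derivative can drop
only at `b`. -/

open Set Topology

theorem leftD_le_rightD_of_convexOn {f : ℝ → ℝ} {S : Set ℝ} {x : ℝ}
    (hf : ConvexOn ℝ S f) (hS : S ∈ 𝓝 x) : leftD f x ≤ rightD f x :=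
  hf.leftDeriv_le_rightDeriv_of_mem_interior (mem_interior_iff_mem_nhds.2 hS)

theorem eq_of_rightD_lt_leftD {f : ℝ → ℝ} {a x : ℝ}
    (hlt : ConvexOn ℝ (Iio a) f) (hgt : ConvexOn ℝ (Ioi a) f)
    (hx : rightD f x < leftD f x) : x = a := by
  by_contra hne
  rcases lt_or_gt_of_ne hne with h | h
  · exact hx.not_ge (leftD_le_rightD_of_convexOn hlt (Iio_mem_nhds h))
  · exact hx.not_ge (leftD_le_rightD_of_convexOn hgt (Ioi_mem_nhds h))

theorem MI_eq (sMin sMax p t1 t2 : ℝ) :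
    MI sMin sMax p t1 t2 = max 0 (min (min p (sMin + p - t1)) (t2 - max t1 sMax)) := by
  rw [MI, min_min_min_comm, min_sub_sub_left]

section Ramp

variable (c M : ℝ)

theorem convexOn_Iio_max_zero_min_sub :
    ConvexOn ℝ (Iio (M + c)) fun t => max 0 (min c (t - M)) := by
  refine ((convexOn_const 0 (convex_Iio _)).sup
    ((convexOn_id (convex_Iio _)).add_const (-M))).congr fun t (ht : t < M + c) => ?_
  simp only [Pi.sup_apply, min_eq_right (by linarith : t - M ≤ c)]
  rfl

theorem convexOn_Ioi_max_zero_min_sub :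
    ConvexOn ℝ (Ioi (M + c)) fun t => max 0 (min c (t - M)) :=
  (convexOn_const (max 0 c) (convex_Ioi _)).congr fun t (ht : M + c < t) => by
    simp only [min_eq_left (by linarith : c ≤ t - M)]

end Ramp

theorem mi_at_most_one_inflection_general (sMin sMax p t1 : ℝ) :
    ∀ x y : ℝ,
      leftD (fun t2 => MI sMin sMax p t1 t2) x >
        rightD (fun t2 => MI sMin sMax p t1 t2) x →
      leftD (fun t2 => MI sMin sMax p t1 t2) y >
        rightD (fun t2 => MI sMin sMax p t1 t2) y →
      x = y := by
  intro x y hx hy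
  set c := min p (sMin + p - t1)
  set M := max t1 sMax
  have hMI : (fun t2 => MI sMin sMax p t1 t2) = fun t => max 0 (min c (t - M)) :=
    funext (MI_eq sMin sMax p t1)
  rw [hMI] at hx hy
  have hlt := convexOn_Iio_max_zero_min_sub c M
  have hgt := convexOn_Ioi_max_zero_min_sub c M
  rw [eq_of_rightD_lt_leftD hlt hgt hx, eq_of_rightD_lt_leftD hlt hgt hy]

theorem mi_at_most_one_inflection (sMin sMax p t1 : ℝ)
    (hs : sMin ≤ sMax) (hp : 0 ≤ p) :
    ∀ x y : ℝ,
      leftD (fun t2 => MI sMin sMax p t1 t2) x >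
        rightD (fun t2 => MI sMin sMax p t1 t2) x →
      leftD (fun t2 => MI sMin sMax p t1 t2) y >
        rightD (fun t2 => MI sMin sMax p t1 t2) y →
      x = y :=
  mi_at_most_one_inflection_general sMin sMax p t1
end

section
/- For any fixed t1, any point t2 at which the left derivative of t2 ↦ MI(t1,t2,a) strictly exceeds the right derivative belongs to {e_min, e_max, s_min + e_max - t1}. -/
/-! `t2 ↦ MI(t1, t2, a)` is the ramp `t ↦ max 0 (min A (t - m))` with `m = max t1 sMax` and
`A = min p (e_min - t1)`. Away from `m + A` it agrees near each point with a convex function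
(`t ↦ max 0 (t - m)` to the left, the constant `max 0 A` to the right), and a convex function
has left derivative at most its right derivative. So `m + A` is the only possible concave kink,
and splitting the `max` and `min` by cases identifies it with one of the three points. -/

open Filter Topology Set

theorem leftD_le_rightD_of_eventuallyEq_convexOn {f g : ℝ → ℝ} {S : Set ℝ} {x : ℝ}
    (hfg : f =ᶠ[𝓝 x] g) (hg : ConvexOn ℝ S g) (hS : S ∈ 𝓝 x) : leftD f x ≤ rightD f x := by
  unfold leftD rightD
  rw [hfg.derivWithin_eq_of_nhds, hfg.derivWithin_eq_of_nhds]
  exact hg.leftDeriv_le_rightDeriv_of_mem_interior (mem_interior_iff_mem_nhds.mpr hS)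

theorem eq_of_rightD_lt_leftD_ramp {A m x : ℝ}
    (h : rightD (fun t => max 0 (min A (t - m))) x < leftD (fun t => max 0 (min A (t - m))) x) :
    x = m + A := by
  by_contra hx
  refine h.not_ge ?_
  rcases lt_or_gt_of_ne hx with hlt | hgt
  · refine leftD_le_rightD_of_eventuallyEq_convexOn (g := fun t => max 0 (t - m)) ?_ ?_ univ_mem
    · filter_upwards [eventually_lt_nhds hlt] with t ht
      rw [min_eq_right (by linarith)]
    · simp only [sub_eq_add_neg]
      exact (convexOn_const 0 convex_univ).sup ((convexOn_id convex_univ).add_const (-m))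
  · refine leftD_le_rightD_of_eventuallyEq_convexOn (g := fun _ => max 0 A) ?_
      (convexOn_const _ convex_univ) univ_mem
    filter_upwards [eventually_gt_nhds hgt] with t ht
    rw [min_eq_left (by linarith)]

theorem MI_eq_ramp_s12 (sMin sMax p t1 t : ℝ) :
    MI sMin sMax p t1 t = max 0 (min (min p (sMin + p - t1)) (t - max t1 sMax)) := by
  rw [MI, min_min_min_comm, sub_sup]

theorem max_add_min_eq_or_eq_or_eq (sMin sMax p t1 : ℝ) (hs : sMin ≤ sMax) :
    max t1 sMax + min p (sMin + p - t1) = sMin + p ∨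
      max t1 sMax + min p (sMin + p - t1) = sMax + p ∨
      max t1 sMax + min p (sMin + p - t1) = sMin + (sMax + p) - t1 := by
  grind

theorem mi_inflection_location_general (sMin sMax p t1 : ℝ)
    (hs : sMin ≤ sMax) :
    ∀ x : ℝ,
      leftD (fun t2 => MI sMin sMax p t1 t2) x >
        rightD (fun t2 => MI sMin sMax p t1 t2) x →
      x = sMin + p ∨ x = sMax + p ∨ x = sMin + (sMax + p) - t1 := by
  intro x hx
  simp only [MI_eq_ramp_s12] at hx
  rw [eq_of_rightD_lt_leftD_ramp hx]
  exact max_add_min_eq_or_eq_or_eq sMin sMax p t1 hs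

theorem mi_inflection_location (sMin sMax p t1 : ℝ)
    (hs : sMin ≤ sMax) (hp : 0 ≤ p) :
    ∀ x : ℝ,
      leftD (fun t2 => MI sMin sMax p t1 t2) x >
        rightD (fun t2 => MI sMin sMax p t1 t2) x →
      x = sMin + p ∨ x = sMax + p ∨ x = sMin + (sMax + p) - t1 :=
  mi_inflection_location_general sMin sMax p t1 hs
end

section
/- If a set of activities admits a feasible schedule on a resource of capacity C (i.e., there exist start times s_a with s_min ≤ s_a ≤ s_max such that at every time t, the sum of heights h_a over activities with s_a ≤ t < s_a + p_a is at most C), then for all t1 < t2: C·(t2 - t1) ≥ Σ_a h_a · MI(t1,t2,a). -/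
/-- Minimum intersection over the integers. -/
def MIZ (sMin sMax p t1 t2 : ℤ) : ℤ :=
  max 0 (min (min p (t2 - t1)) (min (sMin + p - t1) (t2 - sMax)))

theorem er_checker_sound {ι : Type*} (A : Finset ι)
    (sMin sMax p h : ι → ℤ) (C : ℤ)
    (hs : ∀ a ∈ A, sMin a ≤ sMax a) (hp : ∀ a ∈ A, 0 ≤ p a)
    (hh : ∀ a ∈ A, 0 ≤ h a) (hC : 0 ≤ C)
    (hfeas : ∃ s : ι → ℤ,
      (∀ a ∈ A, sMin a ≤ s a ∧ s a ≤ sMax a) ∧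
      (∀ t : ℤ, (∑ a ∈ A.filter (fun a => s a ≤ t ∧ t < s a + p a), h a) ≤ C)) :
    ∀ t1 t2 : ℤ, t1 < t2 →
      (∑ a ∈ A, h a * MIZ (sMin a) (sMax a) (p a) t1 t2) ≤ C * (t2 - t1) := by
  obtain ⟨s, hbound, hcap⟩ := hfeas
  intro t1 t2 ht
  have key : ∀ a ∈ A, h a * MIZ (sMin a) (sMax a) (p a) t1 t2 ≤
      ∑ t ∈ Finset.Ico t1 t2, if s a ≤ t ∧ t < s a + p a then h a else 0 := by
    intro a ha
    have hsum : (∑ t ∈ Finset.Ico t1 t2, if s a ≤ t ∧ t < s a + p a then h a else 0)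
        = h a * (((min (s a + p a) t2 - max (s a) t1).toNat : ℤ)) := by
      rw [← Finset.sum_filter, Finset.sum_const, nsmul_eq_mul, mul_comm]
      congr 2
      rw [← Int.card_Ico]
      congr 1
      ext t
      simp only [Finset.mem_filter, Finset.mem_Ico, le_max_iff, lt_min_iff, max_le_iff,
        min_le_iff]
      omega
    rw [hsum]
    have h1 := (hbound a ha).1
    have h2 := (hbound a ha).2
    have h3 := hp a ha
    apply mul_le_mul_of_nonneg_left _ (hh a ha)
    simp only [MIZ]
    omega
  calc (∑ a ∈ A, h a * MIZ (sMin a) (sMax a) (p a) t1 t2)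
      ≤ ∑ a ∈ A, ∑ t ∈ Finset.Ico t1 t2, if s a ≤ t ∧ t < s a + p a then h a else 0 :=
        Finset.sum_le_sum key
    _ = ∑ t ∈ Finset.Ico t1 t2, ∑ a ∈ A.filter (fun a => s a ≤ t ∧ t < s a + p a), h a := by
        rw [Finset.sum_comm]
        exact Finset.sum_congr rfl fun t _ => (Finset.sum_filter _ _).symm
    _ ≤ ∑ t ∈ Finset.Ico t1 t2, C := Finset.sum_le_sum fun t _ => hcap t
    _ = C * (t2 - t1) := by
        rw [Finset.sum_const, Int.card_Ico, nsmul_eq_mul, mul_comm,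
          Int.toNat_of_nonneg (by omega)]
end

section
/- The minimum over all admissible start times s ∈ [s_min, s_max] of the overlap length max(0, min(s+p, t2) - max(s, t1)) equals MI(t1,t2,a); moreover the minimum is attained at s = s_min or at s = s_max. -/
/-!
Writing `min (s + p) t₂ - max s t₁` as `min p (t₂ - t₁) (s + p - t₁) (t₂ - s)` exhibits the overlap
as a minimum of two constants, one term increasing in `s` and one decreasing in `s`. On
`[sMin, sMax]` these two terms are bounded below by their values `sMin + p - t₁` and `t₂ - sMax`
at the two ends, which gives `MI` as a lower bound; and whichever of these two end values is the
smaller one is attained at its own end, since the other term is larger there.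
-/

theorem min_sub_max {α : Type*} [AddCommGroup α] [LinearOrder α] [IsOrderedAddMonoid α]
    (a b c d : α) :
    min a b - max c d = min (min (a - c) (b - d)) (min (a - d) (b - c)) := by
  rw [← min_sub_sub_right, ← min_sub_sub_left, ← min_sub_sub_left]
  ac_rfl

theorem min_add_sub_max (s p t₁ t₂ : ℝ) :
    min (s + p) t₂ - max s t₁ = min (min p (t₂ - t₁)) (min (s + p - t₁) (t₂ - s)) := by
  rw [min_sub_max, add_sub_cancel_left]

theorem mi_is_min_overlap_general (sMin sMax p t1 t2 : ℝ)
    (hs : sMin ≤ sMax) :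
    (∀ s : ℝ, sMin ≤ s → s ≤ sMax →
      MI sMin sMax p t1 t2 ≤ max 0 (min (s + p) t2 - max s t1)) ∧
    (max 0 (min (sMin + p) t2 - max sMin t1) = MI sMin sMax p t1 t2 ∨
     max 0 (min (sMax + p) t2 - max sMax t1) = MI sMin sMax p t1 t2) := by
  simp only [MI, min_add_sub_max]
  refine ⟨fun s hMin hMax => ?_, ?_⟩
  · gcongr
  · rcases le_total (sMin + p - t1) (t2 - sMax) with h | h
    · left
      have hMin : sMin + p - t1 ≤ t2 - sMin := h.trans (by linarith)
      rw [min_eq_left h, min_eq_left hMin]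
    · right
      have hMax : t2 - sMax ≤ sMax + p - t1 := h.trans (by linarith)
      rw [min_eq_right h, min_eq_right hMax]

theorem mi_is_min_overlap (sMin sMax p t1 t2 : ℝ)
    (hs : sMin ≤ sMax) (hp : 0 ≤ p) (ht : t1 ≤ t2) :
    (∀ s : ℝ, sMin ≤ s → s ≤ sMax →
      MI sMin sMax p t1 t2 ≤ max 0 (min (s + p) t2 - max s t1)) ∧
    (max 0 (min (sMin + p) t2 - max sMin t1) = MI sMin sMax p t1 t2 ∨
     max 0 (min (sMax + p) t2 - max sMax t1) = MI sMin sMax p t1 t2) :=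
  mi_is_min_overlap_general sMin sMax p t1 t2 hs
end

section
/- The slack function S(t1,t2) = C·(t2 - t1) - Σ_a h_a · MI(t1,t2,a), for fixed t1, is continuous and piecewise linear in t2, and every local minimum t2* of t2 ↦ S(t1,t2) with negative left derivative and positive right derivative satisfies: there exists an activity j such that the left derivative of t2 ↦ MI(t1,t2,j) at t2* strictly exceeds its right derivative. -/
open Set Filter Topology

theorem hasDerivWithinAt_of_eventually_eq_affine {f : ℝ → ℝ} {s : Set ℝ} {x m : ℝ}
    (hf : ∀ᶠ t in 𝓝[s] x, f t = f x + m * (t - x)) :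
    HasDerivWithinAt f m s x := by
  have haff : HasDerivWithinAt (fun t => f x + m * (t - x)) m s x := by
    simpa using (((hasDerivWithinAt_id x s).sub_const x).const_mul m).const_add (f x)
  exact haff.congr_of_eventuallyEq hf (by ring)

def EventuallyAffineWithin (f : ℝ → ℝ) (s : Set ℝ) (x : ℝ) : Prop :=
  ∃ m, ∀ᶠ t in 𝓝[s] x, f t = f x + m * (t - x)

namespace EventuallyAffineWithin

variable {f g : ℝ → ℝ} {s : Set ℝ} {x : ℝ}

theorem differentiableWithinAt (hf : EventuallyAffineWithin f s x) :
    DifferentiableWithinAt ℝ f s x :=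
  let ⟨_, hm⟩ := hf
  (hasDerivWithinAt_of_eventually_eq_affine hm).differentiableWithinAt

theorem const (c : ℝ) : EventuallyAffineWithin (fun _ => c) s x :=
  ⟨0, .of_forall fun _ => by ring⟩

theorem sub_const (c : ℝ) : EventuallyAffineWithin (fun t => t - c) s x :=
  ⟨1, .of_forall fun _ => by ring⟩

theorem neg (hf : EventuallyAffineWithin f s x) : EventuallyAffineWithin (fun t => -f t) s x :=
  let ⟨m, hm⟩ := hf
  ⟨-m, hm.mono fun t ht => show -f t = -f x + -m * (t - x) by rw [ht]; ring⟩

theorem exists_min_mul_eq (hs : s ⊆ Iic x ∨ s ⊆ Ici x) (a b : ℝ) :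
    ∃ c, ∀ t ∈ s, min (a * (t - x)) (b * (t - x)) = c * (t - x) := by
  rcases hs with hs | hs
  · refine ⟨max a b, fun t ht => ?_⟩
    have hneg : t - x ≤ 0 := sub_nonpos.mpr (hs ht)
    rcases le_total a b with hab | hab
    · rw [max_eq_right hab, min_eq_right (mul_le_mul_of_nonpos_right hab hneg)]
    · rw [max_eq_left hab, min_eq_left (mul_le_mul_of_nonpos_right hab hneg)]
  · refine ⟨min a b, fun t ht => ?_⟩
    have hpos : 0 ≤ t - x := sub_nonneg.mpr (hs ht)
    rcases le_total a b with hab | hab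
    · rw [min_eq_left hab, min_eq_left (mul_le_mul_of_nonneg_right hab hpos)]
    · rw [min_eq_right hab, min_eq_right (mul_le_mul_of_nonneg_right hab hpos)]

theorem min (hs : s ⊆ Iic x ∨ s ⊆ Ici x) (hf : EventuallyAffineWithin f s x)
    (hg : EventuallyAffineWithin g s x) :
    EventuallyAffineWithin (fun t => min (f t) (g t)) s x := by
  wlog hfg : f x ≤ g x generalizing f g
  · simpa only [min_comm] using this hg hf (le_of_not_ge hfg)
  obtain ⟨a, ha⟩ := hf
  obtain ⟨b, hb⟩ := hg
  rcases hfg.lt_or_eq with hlt | heq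
  · have hlt_near : ∀ᶠ t in 𝓝[s] x, f t < g t :=
      (hasDerivWithinAt_of_eventually_eq_affine ha).continuousWithinAt.eventually_lt
        (hasDerivWithinAt_of_eventually_eq_affine hb).continuousWithinAt hlt
    refine ⟨a, ?_⟩
    filter_upwards [ha, hlt_near] with t hft hlt_t
    rw [min_eq_left hlt_t.le, min_eq_left hlt.le, hft]
  · obtain ⟨c, hc⟩ := exists_min_mul_eq hs a b
    refine ⟨c, ?_⟩
    filter_upwards [ha, hb, self_mem_nhdsWithin] with t hft hgt hts
    rw [hft, hgt, ← heq, min_self, min_add_add_left, hc t hts]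

theorem max (hs : s ⊆ Iic x ∨ s ⊆ Ici x) (hf : EventuallyAffineWithin f s x)
    (hg : EventuallyAffineWithin g s x) :
    EventuallyAffineWithin (fun t => max (f t) (g t)) s x := by
  simpa only [min_neg_neg, neg_neg] using (min hs hf.neg hg.neg).neg

end EventuallyAffineWithin

theorem eventuallyAffineWithin_MI (sMin sMax p t1 : ℝ) {s : Set ℝ} {x : ℝ}
    (hs : s ⊆ Iic x ∨ s ⊆ Ici x) : EventuallyAffineWithin (MI sMin sMax p t1) s x := by
  open EventuallyAffineWithin in
  exact (const 0).max hs <| ((const p).min hs (sub_const t1)).min hs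
    ((const (sMin + p - t1)).min hs (sub_const sMax))

theorem derivWithin_sub_sum_mul {ι : Type*} (A : Finset ι) (h : ι → ℝ)
    (F : ι → ℝ → ℝ) (C t1 : ℝ) {s : Set ℝ} {x : ℝ} (hs : UniqueDiffWithinAt ℝ s x)
    (hF : ∀ a ∈ A, DifferentiableWithinAt ℝ (F a) s x) :
    derivWithin (fun t => C * (t - t1) - ∑ a ∈ A, h a * F a t) s x =
      C - ∑ a ∈ A, h a * derivWithin (F a) s x := by
  have hderiv := (((hasDerivWithinAt_id x s).sub_const t1).const_mul C).fun_sub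
    (HasDerivWithinAt.fun_sum fun a ha => (hF a ha).hasDerivWithinAt.const_mul (h a))
  simpa only [id, mul_one] using hderiv.derivWithin hs

theorem slack_local_min_general {ι : Type*} (A : Finset ι)
    (sMin sMax p h : ι → ℝ) (C t1 : ℝ)
    (hh : ∀ a ∈ A, 0 < h a) :
    Continuous (fun t2 => C * (t2 - t1) -
        ∑ a ∈ A, h a * MI (sMin a) (sMax a) (p a) t1 t2) ∧
    ∀ t2s : ℝ,
      IsLocalMin (fun t2 => C * (t2 - t1) -
        ∑ a ∈ A, h a * MI (sMin a) (sMax a) (p a) t1 t2) t2s →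
      leftD (fun t2 => C * (t2 - t1) -
        ∑ a ∈ A, h a * MI (sMin a) (sMax a) (p a) t1 t2) t2s < 0 →
      0 < rightD (fun t2 => C * (t2 - t1) -
        ∑ a ∈ A, h a * MI (sMin a) (sMax a) (p a) t1 t2) t2s →
      ∃ j ∈ A,
        leftD (fun t2 => MI (sMin j) (sMax j) (p j) t1 t2) t2s >
          rightD (fun t2 => MI (sMin j) (sMax j) (p j) t1 t2) t2s := by
  refine ⟨by unfold MI; fun_prop, fun x _ hL hR => ?_⟩
  have hdiff : ∀ s, s ⊆ Iic x ∨ s ⊆ Ici x → ∀ a ∈ A,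
      DifferentiableWithinAt ℝ (MI (sMin a) (sMax a) (p a) t1) s x :=
    fun s hs a _ => (eventuallyAffineWithin_MI _ _ _ _ hs).differentiableWithinAt
  rw [leftD, derivWithin_sub_sum_mul _ _ _ _ _ (uniqueDiffWithinAt_Iio x)
    (hdiff _ (.inl Iio_subset_Iic_self))] at hL
  rw [rightD, derivWithin_sub_sum_mul _ _ _ _ _ (uniqueDiffWithinAt_Ioi x)
    (hdiff _ (.inr Ioi_subset_Ici_self))] at hR
  have hsum : ∑ a ∈ A, h a * rightD (MI (sMin a) (sMax a) (p a) t1) x <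
      ∑ a ∈ A, h a * leftD (MI (sMin a) (sMax a) (p a) t1) x := by
    unfold leftD rightD
    linarith
  obtain ⟨j, hj, hlt⟩ := Finset.exists_lt_of_sum_lt hsum
  exact ⟨j, hj, lt_of_mul_lt_mul_left hlt (hh j hj).le⟩

theorem slack_local_min {ι : Type*} (A : Finset ι)
    (sMin sMax p h : ι → ℝ) (C t1 : ℝ)
    (hs : ∀ a ∈ A, sMin a ≤ sMax a) (hp : ∀ a ∈ A, 0 ≤ p a)
    (hh : ∀ a ∈ A, 0 < h a) :
    Continuous (fun t2 => C * (t2 - t1) -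
        ∑ a ∈ A, h a * MI (sMin a) (sMax a) (p a) t1 t2) ∧
    ∀ t2s : ℝ,
      IsLocalMin (fun t2 => C * (t2 - t1) -
        ∑ a ∈ A, h a * MI (sMin a) (sMax a) (p a) t1 t2) t2s →
      leftD (fun t2 => C * (t2 - t1) -
        ∑ a ∈ A, h a * MI (sMin a) (sMax a) (p a) t1 t2) t2s < 0 →
      0 < rightD (fun t2 => C * (t2 - t1) -
        ∑ a ∈ A, h a * MI (sMin a) (sMax a) (p a) t1 t2) t2s →
      ∃ j ∈ A,
        leftD (fun t2 => MI (sMin j) (sMax j) (p j) t1 t2) t2s >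
          rightD (fun t2 => MI (sMin j) (sMax j) (p j) t1 t2) t2s :=
  slack_local_min_general A sMin sMax p h C t1 hh
end

section
/- For any activity a and fixed t2, the function t1 ↦ MI(t1,t2,a) is nonincreasing in t1 and has at most one point at which its right derivative strictly exceeds its left derivative. -/
private lemma myDerivCongr {f g : ℝ → ℝ} {s : Set ℝ} {x : ℝ}
    (h : ∀ᶠ t in nhdsWithin x s, f t = g t) (hx : f x = g x) :
    derivWithin f s x = derivWithin g s x :=
  Filter.EventuallyEq.derivWithin_eq h hx

private lemma myDerivCst {c : ℝ} {s : Set ℝ} {z : ℝ} (hu : UniqueDiffWithinAt ℝ s z) :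
    derivWithin (fun _ : ℝ => c) s z = 0 :=
  (hasDerivWithinAt_const z s c).derivWithin hu

private lemma myDerivLine {K : ℝ} {s : Set ℝ} {z : ℝ} (hu : UniqueDiffWithinAt ℝ s z) :
    derivWithin (fun t : ℝ => K - t) s z = -1 :=
  ((hasDerivWithinAt_id z s).const_sub K).derivWithin hu

theorem mi_t1_antitone_and_inflection (sMin sMax p t2 : ℝ)
    (hs : sMin ≤ sMax) (hp : 0 ≤ p) :
    Antitone (fun t1 => MI sMin sMax p t1 t2) ∧
    ∀ x y : ℝ,
      rightD (fun t1 => MI sMin sMax p t1 t2) x >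
        leftD (fun t1 => MI sMin sMax p t1 t2) x →
      rightD (fun t1 => MI sMin sMax p t1 t2) y >
        leftD (fun t1 => MI sMin sMax p t1 t2) y →
      x = y := by
  set C := min p (t2 - sMax) with hCdef
  set K := min t2 (sMin + p) with hKdef
  have hf' : (fun t1 => MI sMin sMax p t1 t2) = fun t => max 0 (min C (K - t)) := by
    funext t
    have hKt : K - t = min (t2 - t) (sMin + p - t) := (min_sub_sub_right t2 (sMin + p) t).symm
    rw [MI, hKt, hCdef]
    congr 1
    simp only [min_assoc, min_comm, min_left_comm]
  rw [hf']
  constructor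
  · intro a b hab
    exact max_le_max le_rfl (min_le_min le_rfl (by linarith))
  · set g : ℝ → ℝ := fun t => max 0 (min C (K - t)) with hgdef
    rcases le_or_gt C 0 with hC | hC
    · have hg0 : g = fun _ => (0 : ℝ) := by
        funext t
        exact max_eq_left (le_trans (min_le_left _ _) hC)
      rw [hg0]
      intro x y hx hy
      rw [rightD, leftD, myDerivCst (uniqueDiffWithinAt_Ioi x),
        myDerivCst (uniqueDiffWithinAt_Iio x)] at hx
      exact absurd hx (lt_irrefl 0)
    · -- values of g on the three pieces
      have hgC : ∀ t, t < K - C → g t = C := by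
        intro t ht
        have : min C (K - t) = C := min_eq_left (by linarith)
        rw [hgdef]; simp only [this]; exact max_eq_right hC.le
      have hgL : ∀ t, K - C ≤ t → t ≤ K → g t = K - t := by
        intro t h1 h2
        have : min C (K - t) = K - t := min_eq_right (by linarith)
        rw [hgdef]; simp only [this]; exact max_eq_right (by linarith)
      have hg0 : ∀ t, K ≤ t → g t = 0 := by
        intro t ht
        exact max_eq_left (le_trans (min_le_right _ _) (by linarith))
      have key : ∀ z, rightD g z > leftD g z → z = K := by
        intro z hz
        rcases lt_trichotomy z K with hzK | hzK | hzK
        · exfalso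
          rcases lt_trichotomy z (K - C) with h1 | h1 | h1
          · -- g = C near z
            have hev : ∀ᶠ t in nhds z, g t = C := by
              filter_upwards [Iio_mem_nhds h1] with t ht
              exact hgC t ht
            have hzv : g z = C := hgC z h1
            have hl : leftD g z = 0 := by
              rw [leftD, myDerivCongr (hev.filter_mono nhdsWithin_le_nhds) hzv,
                myDerivCst (uniqueDiffWithinAt_Iio z)]
            have hr : rightD g z = 0 := by
              rw [rightD, myDerivCongr (hev.filter_mono nhdsWithin_le_nhds) hzv,
                myDerivCst (uniqueDiffWithinAt_Ioi z)]
            rw [hl, hr] at hz; exact lt_irrefl _ hz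
          · -- z = K - C : leftD = 0, rightD = -1
            have hzv : g z = C := by
              rw [hgL z h1.ge (by linarith)]; linarith
            have hevL : ∀ᶠ t in nhdsWithin z (Set.Iio z), g t = C := by
              filter_upwards [self_mem_nhdsWithin] with t ht
              exact hgC t (by rw [← h1]; exact ht)
            have hl : leftD g z = 0 := by
              rw [leftD, myDerivCongr hevL hzv, myDerivCst (uniqueDiffWithinAt_Iio z)]
            have hzv2 : g z = K - z := by rw [hzv]; linarith
            have hevR : ∀ᶠ t in nhdsWithin z (Set.Ioi z), g t = K - t := by
              filter_upwards [self_mem_nhdsWithin,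
                mem_nhdsWithin_of_mem_nhds (Iio_mem_nhds hzK)] with t ht1 ht2
              have h1' : z < t := Set.mem_Ioi.mp ht1
              exact hgL t (by linarith) (Set.mem_Iio.mp ht2).le
            have hr : rightD g z = -1 := by
              rw [rightD, myDerivCongr hevR hzv2, myDerivLine (uniqueDiffWithinAt_Ioi z)]
            rw [hl, hr] at hz; linarith
          · -- K - C < z < K : g = K - t near z
            have hev : ∀ᶠ t in nhds z, g t = K - t := by
              filter_upwards [Ioo_mem_nhds h1 hzK] with t ht
              exact hgL t ht.1.le ht.2.le
            have hzv : g z = K - z := hgL z h1.le hzK.le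
            have hl : leftD g z = -1 := by
              rw [leftD, myDerivCongr (hev.filter_mono nhdsWithin_le_nhds) hzv,
                myDerivLine (uniqueDiffWithinAt_Iio z)]
            have hr : rightD g z = -1 := by
              rw [rightD, myDerivCongr (hev.filter_mono nhdsWithin_le_nhds) hzv,
                myDerivLine (uniqueDiffWithinAt_Ioi z)]
            rw [hl, hr] at hz; exact lt_irrefl _ hz
        · exact hzK
        · exfalso
          have hev : ∀ᶠ t in nhds z, g t = 0 := by
            filter_upwards [Ioi_mem_nhds hzK] with t ht
            exact hg0 t ht.le
          have hzv : g z = 0 := hg0 z hzK.le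
          have hl : leftD g z = 0 := by
            rw [leftD, myDerivCongr (hev.filter_mono nhdsWithin_le_nhds) hzv,
              myDerivCst (uniqueDiffWithinAt_Iio z)]
          have hr : rightD g z = 0 := by
            rw [rightD, myDerivCongr (hev.filter_mono nhdsWithin_le_nhds) hzv,
              myDerivCst (uniqueDiffWithinAt_Ioi z)]
          rw [hl, hr] at hz; exact lt_irrefl _ hz
      intro x y hx hy
      rw [key x hx, key y hy]
end
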